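/- arXiv:1811.10757 — 5 statements merged into one kernel-verified Lean document; each statement's English description precedes it below -/
import Mathlib

section
/- Let H : ℝ → ℝ be a differentiable function and let α : ℝ → ℝ be a strictly increasing function with α(0) = 0 (an extended class-K function). If H(0) ≥ 0 and for all t ≥ 0 the derivative satisfies H'(t) ≥ -α(H(t)), then H(t) ≥ 0 for all t ≥ 0. -/
open Set

theorem image_nonneg_of_deriv_right_pos_of_neg {f f' : ℝ → ℝ} {a b : ℝ}
    (hf : ContinuousOn f (Icc a b)) (hf' : ∀ x ∈ Ico a b, HasDerivWithinAt f (f' x) (Ici x) x)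
    (ha : 0 ≤ f a) (hpos : ∀ x ∈ Ico a b, f x < 0 → 0 < f' x) :
    ∀ ⦃x⦄, x ∈ Icc a b → 0 ≤ f x := by
  intro x hx
  -- Fence `-f` by every positive constant `ε`: touching the fence forces `f < 0`, hence `-f' < 0`.
  have hfence : ∀ ε > 0, -f x ≤ ε := fun ε hε =>
    image_le_of_deriv_right_lt_deriv_boundary' hf.neg (fun y hy => (hf' y hy).neg)
      (by rw [Pi.neg_apply]; linarith) continuousOn_const (fun _ _ => hasDerivWithinAt_const _ _ ε)
      (fun y hy hfy => by rw [Pi.neg_apply] at hfy; linarith [hpos y hy (by linarith)]) hx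
  have : -f x ≤ 0 := le_of_forall_pos_le_add fun ε hε => by simpa using hfence ε hε
  linarith

/-- Scalar comparison lemma underlying zeroing control barrier functions:
if `H(0) ≥ 0` and `H'(t) ≥ -α(H(t))` for all `t ≥ 0`, where `α` is an
extended class-K function (strictly increasing with `α 0 = 0`), then
`H(t) ≥ 0` for all `t ≥ 0`. -/
theorem zcbf_scalar_comparison
    (H : ℝ → ℝ) (α : ℝ → ℝ)
    (hH : Differentiable ℝ H)
    (hα_mono : StrictMono α) (hα0 : α 0 = 0)
    (hinit : 0 ≤ H 0)
    (hbarrier : ∀ t : ℝ, 0 ≤ t → deriv H t ≥ -α (H t)) :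
    ∀ t : ℝ, 0 ≤ t → 0 ≤ H t := by
  intro t ht
  have hderiv_pos : ∀ x ∈ Ico 0 t, H x < 0 → 0 < deriv H x := fun x hx hHx => by
    have : α (H x) < 0 := hα0 ▸ hα_mono hHx
    linarith [hbarrier x hx.1]
  exact image_nonneg_of_deriv_right_pos_of_neg hH.continuous.continuousOn
    (fun x _ => (hH x).hasDerivAt.hasDerivWithinAt) hinit hderiv_pos ⟨ht, le_rfl⟩
end

section
/- Let H : ℝ → ℝ be twice differentiable, let α₁ : ℝ → ℝ be a differentiable strictly increasing function with α₁(0) = 0, and let α₂ : ℝ → ℝ be a strictly increasing function with α₂(0) = 0. Define B : ℝ → ℝ by B(t) = H'(t) + α₁(H(t)). If H(0) ≥ 0, B(0) ≥ 0, and for all t ≥ 0 the derivative satisfies B'(t) ≥ -α₂(B(t)), then B(t) ≥ 0 for all t ≥ 0 and H(t) ≥ 0 for all t ≥ 0. -/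
open Set

/-- Past the last point `s ≤ t` where `f ≥ 0`, `f` is negative, hence strictly increasing on
`[s, t]`, so `f t > f s ≥ 0`. -/
theorem nonneg_of_deriv_pos_of_neg {f : ℝ → ℝ} {a : ℝ} (hf : ContinuousOn f (Ici a))
    (ha : 0 ≤ f a) (hpos : ∀ t, a < t → f t < 0 → 0 < deriv f t) :
    ∀ t, a ≤ t → 0 ≤ f t := by
  intro t hat
  by_contra! hft
  set S := Icc a t ∩ {x | 0 ≤ f x}
  have hS : IsClosed S :=
    (hf.mono Icc_subset_Ici_self).preimage_isClosed_of_isClosed isClosed_Icc isClosed_Ici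
  have hSbdd : BddAbove S := ⟨t, fun x hx => hx.1.2⟩
  obtain ⟨⟨has, hst⟩, hfs : 0 ≤ f (sSup S)⟩ : sSup S ∈ S := hS.csSup_mem ⟨a, ⟨le_rfl, hat⟩, ha⟩ hSbdd
  set s := sSup S
  have hneg_after : ∀ x ∈ Ioc s t, f x < 0 := fun x hx => by
    by_contra! hfx
    exact hx.1.not_ge (le_csSup hSbdd ⟨⟨has.trans hx.1.le, hx.2⟩, hfx⟩)
  have hmono : StrictMonoOn f (Icc s t) := by
    refine strictMonoOn_of_deriv_pos (convex_Icc s t) (hf.mono (Icc_subset_Ici_iff hst |>.2 has)) ?_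
    rw [interior_Icc]
    exact fun x hx => hpos x (has.trans_lt hx.1) (hneg_after x ⟨hx.1, hx.2.le⟩)
  have hs_lt_t : s < t := hst.lt_of_ne fun h => (h ▸ hfs).not_gt hft
  linarith [hmono ⟨le_rfl, hst⟩ ⟨hst, le_rfl⟩ hs_lt_t, hfs]

theorem nonneg_of_deriv_ge_neg_strictMono {f α : ℝ → ℝ} {a : ℝ} (hf : ContinuousOn f (Ici a))
    (hα : StrictMono α) (hα0 : α 0 = 0) (ha : 0 ≤ f a)
    (hd : ∀ t, a ≤ t → deriv f t ≥ -α (f t)) :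
    ∀ t, a ≤ t → 0 ≤ f t :=
  nonneg_of_deriv_pos_of_neg hf ha fun t hat hft => by
    have : α (f t) < 0 := hα0 ▸ hα hft
    linarith [hd t hat.le]

/-- Theorem 1 of the paper (zeroing control barrier functions for relative
degree two systems) evaluated along a trajectory: with `B(t) = H'(t) + α₁(H(t))`,
if `H(0) ≥ 0`, `B(0) ≥ 0`, and `B'(t) ≥ -α₂(B(t))` for all `t ≥ 0`, then both
`B(t) ≥ 0` and `H(t) ≥ 0` for all `t ≥ 0`. -/
theorem zcbf_relative_degree_two
    (H : ℝ → ℝ) (α₁ α₂ : ℝ → ℝ)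
    (hH : Differentiable ℝ H) (hH' : Differentiable ℝ (deriv H))
    (hα₁ : Differentiable ℝ α₁)
    (hα₁_mono : StrictMono α₁) (hα₁0 : α₁ 0 = 0)
    (hα₂_mono : StrictMono α₂) (hα₂0 : α₂ 0 = 0)
    (B : ℝ → ℝ) (hB : ∀ t : ℝ, B t = deriv H t + α₁ (H t))
    (hinitH : 0 ≤ H 0) (hinitB : 0 ≤ B 0)
    (hbarrier : ∀ t : ℝ, 0 ≤ t → deriv B t ≥ -α₂ (B t)) :
    (∀ t : ℝ, 0 ≤ t → 0 ≤ B t) ∧ (∀ t : ℝ, 0 ≤ t → 0 ≤ H t) := by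
  have hB_cont : Continuous B := by
    rw [funext hB]
    exact (hH'.add (hα₁.comp hH)).continuous
  have hB_nonneg := nonneg_of_deriv_ge_neg_strictMono hB_cont.continuousOn hα₂_mono hα₂0 hinitB
    hbarrier
  refine ⟨hB_nonneg, nonneg_of_deriv_ge_neg_strictMono hH.continuous.continuousOn hα₁_mono hα₁0
    hinitH fun t ht => ?_⟩
  linarith [hB t, hB_nonneg t ht]
end

section
/- Let J be a finite index set. For each j ∈ J let H_j : ℝ → ℝ be twice differentiable, let α₁ : ℝ → ℝ be a differentiable strictly increasing function with α₁(0) = 0, and let α₂ : ℝ → ℝ be a strictly increasing function with α₂(0) = 0. Define B_j(t) = H_j'(t) + α₁(H_j(t)). If for every j ∈ J we have H_j(0) ≥ 0, B_j(0) ≥ 0, and B_j'(t) ≥ -α₂(B_j(t)) for all t ≥ 0, then H_j(t) ≥ 0 for all t ≥ 0 and all j ∈ J; i.e., the trajectory remains in the intersection of all the constraint sets {H_j ≥ 0}. -/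
/-!
Each `j` is handled separately by two applications of one comparison principle
(`f 0 ≥ 0` and `f' ≥ -α ∘ f` force `f ≥ 0`): to `B_j` it gives `B_j ≥ 0`, i.e.
`H_j' ≥ -α₁ ∘ H_j`, and then to `H_j` it gives `H_j ≥ 0`.
-/

open Set

theorem StrictMono.neg_of_neg {α : ℝ → ℝ} (hα : StrictMono α) (hα0 : α 0 = 0) :
    ∀ x < 0, α x < 0 :=
  fun _ hx => hα0 ▸ hα hx

theorem deriv_nonpos_of_isMinOn_Icc_right {f : ℝ → ℝ} {a b : ℝ} (hab : a < b)
    (hf : DifferentiableAt ℝ f b) (hmin : IsMinOn f (Icc a b) b) : deriv f b ≤ 0 := by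
  have hcone : a - b ∈ posTangentConeAt (Icc a b) b :=
    sub_mem_posTangentConeAt_of_segment_subset <|
      (convex_Icc a b).segment_subset (right_mem_Icc.2 hab.le) (left_mem_Icc.2 hab.le)
  have h := hmin.localize.hasFDerivWithinAt_nonneg hf.hasDerivAt.hasFDerivAt.hasFDerivWithinAt hcone
  simp only [ContinuousLinearMap.toSpanSingleton_apply, smul_eq_mul] at h
  exact nonpos_of_mul_nonneg_right h (sub_neg.2 hab)

/- At a negative minimum `m > 0` of `f` on `[0, T]` we would have `f' m ≥ -α (f m) > 0`,
so `f` would take smaller values just left of `m`. -/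
theorem nonneg_of_deriv_ge_neg_comp {f α : ℝ → ℝ} (hf : Differentiable ℝ f)
    (hα : ∀ x < 0, α x < 0) (h0 : 0 ≤ f 0) (hderiv : ∀ t, 0 ≤ t → -α (f t) ≤ deriv f t)
    {T : ℝ} (hT : 0 ≤ T) : 0 ≤ f T := by
  by_contra! hfT
  obtain ⟨m, hm, hmin⟩ :=
    isCompact_Icc.exists_isMinOn (nonempty_Icc.2 hT) hf.continuous.continuousOn
  have hfm : f m < 0 := (hmin (right_mem_Icc.2 hT)).trans_lt hfT
  have hm0 : 0 < m := hm.1.lt_of_ne (by rintro rfl; linarith)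
  have hderiv_nonpos : deriv f m ≤ 0 :=
    deriv_nonpos_of_isMinOn_Icc_right hm0 (hf m) (hmin.on_subset (Icc_subset_Icc_right hm.2))
  linarith [hα _ hfm, hderiv m hm.1]

theorem nonneg_of_second_order_barrier {h b α₁ α₂ : ℝ → ℝ} (hh : Differentiable ℝ h)
    (hh' : Differentiable ℝ (deriv h)) (hα₁ : Differentiable ℝ α₁)
    (hα₁_neg : ∀ x < 0, α₁ x < 0) (hα₂_neg : ∀ x < 0, α₂ x < 0)
    (hb : ∀ t, b t = deriv h t + α₁ (h t)) (h0 : 0 ≤ h 0) (hb0 : 0 ≤ b 0)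
    (hbarrier : ∀ t, 0 ≤ t → deriv b t ≥ -α₂ (b t)) {T : ℝ} (hT : 0 ≤ T) : 0 ≤ h T := by
  have hb_diff : Differentiable ℝ b := by
    rw [funext hb]
    exact hh'.add (hα₁.comp hh)
  refine nonneg_of_deriv_ge_neg_comp hh hα₁_neg h0 (fun t ht => ?_) hT
  have := nonneg_of_deriv_ge_neg_comp hb_diff hα₂_neg hb0 hbarrier ht
  linarith [hb t]

theorem zcbf_finite_intersection_invariance_general
    (J : Type*)
    (H : J → ℝ → ℝ) (α₁ α₂ : ℝ → ℝ)
    (hH : ∀ j : J, Differentiable ℝ (H j))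
    (hH' : ∀ j : J, Differentiable ℝ (deriv (H j)))
    (hα₁ : Differentiable ℝ α₁)
    (hα₁_mono : StrictMono α₁) (hα₁0 : α₁ 0 = 0)
    (hα₂_mono : StrictMono α₂) (hα₂0 : α₂ 0 = 0)
    (B : J → ℝ → ℝ) (hB : ∀ j : J, ∀ t : ℝ, B j t = deriv (H j) t + α₁ (H j t))
    (hinitH : ∀ j : J, 0 ≤ H j 0) (hinitB : ∀ j : J, 0 ≤ B j 0)
    (hbarrier : ∀ j : J, ∀ t : ℝ, 0 ≤ t → deriv (B j) t ≥ -α₂ (B j t)) :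
    ∀ j : J, ∀ t : ℝ, 0 ≤ t → 0 ≤ H j t :=
  fun j _ ht => nonneg_of_second_order_barrier (hH j) (hH' j) hα₁
    (hα₁_mono.neg_of_neg hα₁0) (hα₂_mono.neg_of_neg hα₂0) (hB j) (hinitH j) (hinitB j)
    (hbarrier j) ht

/-- Proposition 1 structure: finitely many simultaneous zeroing-control-barrier
conditions render the intersection of the constraint sets `{H_j ≥ 0}` forward
invariant along the closed-loop trajectory. -/
theorem zcbf_finite_intersection_invariance
    (J : Type*) [Fintype J]
    (H : J → ℝ → ℝ) (α₁ α₂ : ℝ → ℝ)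
    (hH : ∀ j : J, Differentiable ℝ (H j))
    (hH' : ∀ j : J, Differentiable ℝ (deriv (H j)))
    (hα₁ : Differentiable ℝ α₁)
    (hα₁_mono : StrictMono α₁) (hα₁0 : α₁ 0 = 0)
    (hα₂_mono : StrictMono α₂) (hα₂0 : α₂ 0 = 0)
    (B : J → ℝ → ℝ) (hB : ∀ j : J, ∀ t : ℝ, B j t = deriv (H j) t + α₁ (H j t))
    (hinitH : ∀ j : J, 0 ≤ H j 0) (hinitB : ∀ j : J, 0 ≤ B j 0)
    (hbarrier : ∀ j : J, ∀ t : ℝ, 0 ≤ t → deriv (B j) t ≥ -α₂ (B j t)) :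
    ∀ j : J, ∀ t : ℝ, 0 ≤ t → 0 ≤ H j t :=
  zcbf_finite_intersection_invariance_general J H α₁ α₂ hH hH' hα₁ hα₁_mono hα₁0 hα₂_mono hα₂0 B hB
    hinitH hinitB hbarrier
end

section
/- Let n ≥ 1 and let p : Fin n → (Fin 3 → ℝ) be contact point positions whose range is not collinear (there is no affine line in ℝ³ containing all the points p i). Then the grasp map is surjective: for every desired net force F ∈ ℝ³ and net torque τ ∈ ℝ³, there exist contact forces f : Fin n → (Fin 3 → ℝ) such that ∑ i, f i = F and ∑ i, (p i) ×ᵥ (f i) = τ, where ×ᵥ denotes the cross product in ℝ³. -/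
open Matrix

/-!
Taking moments about a contact point `p i`, a force `a` at `p j` has torque `(p j - p i) ⨯₃ a`.
Non-collinearity gives contact points `p j`, `p k` with `v₁ = p j - p i` and `v₂ = p k - p i`
linearly independent. The image of `a ↦ v ⨯₃ a` is the plane orthogonal to `v`, and two distinct
planes through the origin sum to all of `ℝ³`, so forces at `p j` and `p k` produce any torque about
`p i`; a force at `p i` then fixes the net force without changing that torque.
-/

section CrossProduct

variable {R : Type*} [Field R]

theorem exists_smul_eq_of_crossProduct_eq_zero {v w : Fin 3 → R} (hv : v ≠ 0)
    (h : v ⨯₃ w = 0) : ∃ r : R, r • v = w := by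
  have hdep : ¬ LinearIndependent R ![v, w] := by
    rwa [← crossProduct_ne_zero_iff_linearIndependent, not_not]
  simpa [LinearIndependent.pair_iff' hv] using hdep

theorem exists_crossProduct_eq_of_dotProduct_eq_zero {v t : Fin 3 → R}
    (hv : v ⬝ᵥ v ≠ 0) (ht : v ⬝ᵥ t = 0) : ∃ g : Fin 3 → R, v ⨯₃ g = t :=
  ⟨(v ⬝ᵥ v)⁻¹ • t ⨯₃ v, by
    rw [map_smul, cross_cross_eq_smul_sub_smul', dotProduct_comm t, ht, zero_smul, sub_zero,
      smul_smul, inv_mul_cancel₀ hv, one_smul]⟩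

theorem exists_crossProduct_sub_ne_zero_of_not_collinear {ι : Type*} {p : ι → Fin 3 → R}
    (h : ¬ Collinear R (Set.range p)) :
    ∃ i j k, (p j - p i) ⨯₃ (p k - p i) ≠ 0 := by
  by_contra! hcross
  apply h
  rcases isEmpty_or_nonempty ι with _ | ⟨⟨i⟩⟩
  · rw [Set.range_eq_empty]
    exact collinear_empty R _
  by_cases hconst : ∀ j, p j = p i
  · exact (collinear_singleton R (p i)).subset (Set.range_subset_iff.2 fun j => by simp [hconst j])
  obtain ⟨j, hj⟩ := not_forall.1 hconst
  rw [collinear_iff_of_mem (Set.mem_range_self i)]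
  refine ⟨p j - p i, Set.forall_mem_range.2 fun k => ?_⟩
  obtain ⟨r, hr⟩ := exists_smul_eq_of_crossProduct_eq_zero (sub_ne_zero.2 hj) (hcross i j k)
  exact ⟨r, by rw [vadd_eq_add, hr, sub_add_cancel]⟩

variable [LinearOrder R] [IsStrictOrderedRing R]

theorem exists_crossProduct_add_crossProduct_eq {v₁ v₂ : Fin 3 → R} (h : v₁ ⨯₃ v₂ ≠ 0)
    (t : Fin 3 → R) : ∃ g₁ g₂ : Fin 3 → R, v₁ ⨯₃ g₁ + v₂ ⨯₃ g₂ = t := by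
  have hv₁ : v₁ ⬝ᵥ v₁ ≠ 0 := mt dotProduct_self_eq_zero.1 (by rintro rfl; simp at h)
  have hv₂ : v₂ ⬝ᵥ v₂ ≠ 0 := mt dotProduct_self_eq_zero.1 (by rintro rfl; simp at h)
  have hw : (v₁ ⨯₃ v₂) ⬝ᵥ (v₁ ⨯₃ v₂) ≠ 0 := mt dotProduct_self_eq_zero.1 h
  -- `c ⊥ v₂` and `v₁ ⬝ᵥ c ≠ 0`, so a multiple `t₂` of `c` splits `t` into parts `⊥ v₁` and `⊥ v₂`
  set c := v₂ ⨯₃ (v₁ ⨯₃ v₂)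
  have hc₁ : v₁ ⬝ᵥ c = (v₁ ⨯₃ v₂) ⬝ᵥ (v₁ ⨯₃ v₂) := by
    rw [triple_product_permutation, triple_product_permutation]
  set t₂ := ((v₁ ⬝ᵥ t) / (v₁ ⬝ᵥ c)) • c
  have ht₂ : v₂ ⬝ᵥ t₂ = 0 := by
    rw [dotProduct_smul, dot_self_cross, smul_zero]
  have ht₁ : v₁ ⬝ᵥ (t - t₂) = 0 := by
    rw [dotProduct_sub, dotProduct_smul, smul_eq_mul, div_mul_cancel₀ _ (hc₁ ▸ hw), sub_self]
  obtain ⟨g₁, hg₁⟩ := exists_crossProduct_eq_of_dotProduct_eq_zero hv₁ ht₁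
  obtain ⟨g₂, hg₂⟩ := exists_crossProduct_eq_of_dotProduct_eq_zero hv₂ ht₂
  exact ⟨g₁, g₂, by rw [hg₁, hg₂, sub_add_cancel]⟩

end CrossProduct

section GraspMap

variable {R ι : Type*} [CommRing R] [Fintype ι]

def graspMap (p : ι → Fin 3 → R) : (ι → Fin 3 → R) →ₗ[R] (Fin 3 → R) × (Fin 3 → R) where
  toFun f := (∑ i, f i, ∑ i, p i ⨯₃ f i)
  map_add' f g := by simp [Finset.sum_add_distrib]
  map_smul' c f := by simp [Finset.smul_sum]

theorem graspMap_single [DecidableEq ι] (p : ι → Fin 3 → R) (i : ι) (a : Fin 3 → R) :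
    graspMap p (Pi.single i a) = (a, p i ⨯₃ a) := by
  simp only [graspMap, LinearMap.coe_mk, AddHom.coe_mk, Fintype.sum_pi_single',
    Pi.apply_single (fun j => crossProduct (p j)) (fun j => map_zero _)]

end GraspMap

theorem graspMap_surjective {R ι : Type*} [Field R] [LinearOrder R] [IsStrictOrderedRing R]
    [Fintype ι] {p : ι → Fin 3 → R} (h : ¬ Collinear R (Set.range p)) :
    Function.Surjective (graspMap p) := by
  classical
  rintro ⟨F, τ⟩
  obtain ⟨i, j, k, hijk⟩ := exists_crossProduct_sub_ne_zero_of_not_collinear h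
  obtain ⟨g₁, g₂, hg⟩ := exists_crossProduct_add_crossProduct_eq hijk (τ - p i ⨯₃ F)
  refine ⟨Pi.single i (F - g₁ - g₂) + Pi.single j g₁ + Pi.single k g₂, ?_⟩
  simp only [map_add, graspMap_single, Prod.mk_add_mk, Prod.mk.injEq, map_sub,
    LinearMap.sub_apply] at hg ⊢
  exact ⟨by abel, by linear_combination (norm := module) hg⟩

theorem grasp_map_surjective_of_not_collinear_general
    (n : ℕ) (p : Fin n → (Fin 3 → ℝ))
    (hnc : ¬ Collinear ℝ (Set.range p)) :
    ∀ F τ : Fin 3 → ℝ, ∃ f : Fin n → (Fin 3 → ℝ),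
      (∑ i, f i) = F ∧ (∑ i, crossProduct (p i) (f i)) = τ := fun F τ =>
  (graspMap_surjective hnc (F, τ)).imp fun _ hf => Prod.ext_iff.1 hf

/-- Full rank of the grasp map: for contact points that are not collinear,
every net wrench (force `F`, torque `τ`) on the object is realizable by some
choice of contact forces. -/
theorem grasp_map_surjective_of_not_collinear
    (n : ℕ) (hn : 1 ≤ n) (p : Fin n → (Fin 3 → ℝ))
    (hnc : ¬ Collinear ℝ (Set.range p)) :
    ∀ F τ : Fin 3 → ℝ, ∃ f : Fin n → (Fin 3 → ℝ),
      (∑ i, f i) = F ∧ (∑ i, crossProduct (p i) (f i)) = τ :=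
  grasp_map_surjective_of_not_collinear_general n p hnc
end

section
/- Let m, k be positive natural numbers with k ≤ m. Let M_h be an m × m real positive definite matrix, M_o a 6 × 6 real positive definite matrix, J a k × m real matrix of full row rank (rank J = k), and G a 6 × k real matrix; set B_ho = J * M_h⁻¹ * Jᵀ + Gᵀ * M_o⁻¹ * G. Suppose vectors a ∈ ℝᵐ, b ∈ ℝ⁶, f ∈ ℝᵏ, τ ∈ ℝᵐ, w ∈ ℝ⁶, c ∈ ℝᵏ, d ∈ ℝᵏ satisfy the hand dynamics M_h a = τ - Jᵀ f, the object dynamics M_o b = G f + w, and the differentiated grasp constraint J a + c = Gᵀ b + d. Then the contact force is uniquely determined as f = B_ho⁻¹ (J (M_h⁻¹ τ) + c - d - Gᵀ (M_o⁻¹ w)). -/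
open Matrix

/-! Solving the hand and object dynamics for `a` and `b` and substituting into the grasp
constraint leaves the linear system `B_ho f = J M_h⁻¹ τ + c - d - Gᵀ M_o⁻¹ w`. The matrix
`B_ho` is positive definite: `J M_h⁻¹ Jᵀ` is, because `M_h⁻¹` is and the rows of `J` are
independent, and `Gᵀ M_o⁻¹ G` is positive semidefinite. Hence `B_ho` is invertible. -/

namespace Matrix

lemma linearIndependent_row_of_rank_eq_card {R m n : Type*} [Field R] [Fintype m] [Fintype n]
    {M : Matrix m n R} (h : M.rank = Fintype.card m) : LinearIndependent R M.row := by
  rw [rank_eq_finrank_span_row] at h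
  exact linearIndependent_iff_card_eq_finrank_span.mpr h.symm

lemma vecMul_injective_of_rank_eq_card {R m n : Type*} [Field R] [Fintype m] [Fintype n]
    {M : Matrix m n R} (h : M.rank = Fintype.card m) : Function.Injective M.vecMul :=
  vecMul_injective_iff.mpr (linearIndependent_row_of_rank_eq_card h)

lemma eq_nonsing_inv_mulVec_of_mulVec_eq {R n : Type*} [CommRing R] [Fintype n]
    [DecidableEq n] {A : Matrix n n R} (hA : IsUnit A.det) {u v : n → R} (h : A *ᵥ u = v) :
    u = A⁻¹ *ᵥ v := by
  rw [← h, mulVec_mulVec, nonsing_inv_mul A hA, one_mulVec]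

lemma PosDef.mul_mul_transpose_add_transpose_mul_mul {m n p : Type*}
    [Fintype m] [Fintype n] [Fintype p] {A : Matrix n n ℝ} {N : Matrix p p ℝ}
    (hA : A.PosDef) (hN : N.PosSemidef) {J : Matrix m n ℝ} (hJ : Function.Injective J.vecMul)
    (G : Matrix p m ℝ) : (J * A * Jᵀ + Gᵀ * N * G).PosDef := by
  have hJAJ := hA.mul_mul_conjTranspose_same hJ
  have hGNG := hN.conjTranspose_mul_mul_same G
  rw [conjTranspose_eq_transpose_of_trivial] at hJAJ hGNG
  exact hJAJ.add_posSemidef hGNG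

end Matrix

lemma reduced_constraint_mulVec {R m n p : Type*} [CommRing R] [Fintype m] [Fintype n]
    [Fintype p] (A : Matrix n n R) (N : Matrix p p R) (J : Matrix m n R) (G : Matrix p m R)
    {f c d : m → R} {τ : n → R} {w : p → R}
    (h : J *ᵥ (A *ᵥ (τ - Jᵀ *ᵥ f)) + c = Gᵀ *ᵥ (N *ᵥ (G *ᵥ f + w)) + d) :
    (J * A * Jᵀ + Gᵀ * N * G) *ᵥ f = J *ᵥ (A *ᵥ τ) + c - d - Gᵀ *ᵥ (N *ᵥ w) := by
  simp only [mulVec_sub, mulVec_add, mulVec_mulVec, add_mulVec, Matrix.mul_assoc] at h ⊢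
  linear_combination -h

theorem contact_force_formula_general
    (m k : ℕ)
    (M_h : Matrix (Fin m) (Fin m) ℝ) (hMh : M_h.PosDef)
    (M_o : Matrix (Fin 6) (Fin 6) ℝ) (hMo : M_o.PosDef)
    (J : Matrix (Fin k) (Fin m) ℝ) (hJ : J.rank = k)
    (G : Matrix (Fin 6) (Fin k) ℝ)
    (a : Fin m → ℝ) (b : Fin 6 → ℝ) (f : Fin k → ℝ)
    (τ : Fin m → ℝ) (w : Fin 6 → ℝ) (c d : Fin k → ℝ)
    (hhand : M_h *ᵥ a = τ - Jᵀ *ᵥ f)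
    (hobj : M_o *ᵥ b = G *ᵥ f + w)
    (hgrasp : J *ᵥ a + c = Gᵀ *ᵥ b + d) :
    f = (J * M_h⁻¹ * Jᵀ + Gᵀ * M_o⁻¹ * G)⁻¹ *ᵥ
      (J *ᵥ (M_h⁻¹ *ᵥ τ) + c - d - Gᵀ *ᵥ (M_o⁻¹ *ᵥ w)) := by
  have hJ_rows : Function.Injective J.vecMul :=
    vecMul_injective_of_rank_eq_card (hJ.trans (Fintype.card_fin k).symm)
  have hB : (J * M_h⁻¹ * Jᵀ + Gᵀ * M_o⁻¹ * G).PosDef :=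
    hMh.inv.mul_mul_transpose_add_transpose_mul_mul hMo.inv.posSemidef hJ_rows G
  have ha := eq_nonsing_inv_mulVec_of_mulVec_eq hMh.det_pos.ne'.isUnit hhand
  have hb := eq_nonsing_inv_mulVec_of_mulVec_eq hMo.det_pos.ne'.isUnit hobj
  rw [ha, hb] at hgrasp
  exact eq_nonsing_inv_mulVec_of_mulVec_eq hB.det_pos.ne'.isUnit
    (reduced_constraint_mulVec _ _ _ _ hgrasp)

/-- Equation (19) of the paper: given the hand dynamics `M_h a = τ - Jᵀ f`,
the object dynamics `M_o b = G f + w`, and the differentiated grasp constraint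
`J a + c = Gᵀ b + d`, the contact force is uniquely determined as
`f = B_ho⁻¹ (J (M_h⁻¹ τ) + c - d - Gᵀ (M_o⁻¹ w))`
with `B_ho = J M_h⁻¹ Jᵀ + Gᵀ M_o⁻¹ G`. -/
theorem contact_force_formula
    (m k : ℕ) (hm : 0 < m) (hk : 0 < k) (hkm : k ≤ m)
    (M_h : Matrix (Fin m) (Fin m) ℝ) (hMh : M_h.PosDef)
    (M_o : Matrix (Fin 6) (Fin 6) ℝ) (hMo : M_o.PosDef)
    (J : Matrix (Fin k) (Fin m) ℝ) (hJ : J.rank = k)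
    (G : Matrix (Fin 6) (Fin k) ℝ)
    (a : Fin m → ℝ) (b : Fin 6 → ℝ) (f : Fin k → ℝ)
    (τ : Fin m → ℝ) (w : Fin 6 → ℝ) (c d : Fin k → ℝ)
    (hhand : M_h *ᵥ a = τ - Jᵀ *ᵥ f)
    (hobj : M_o *ᵥ b = G *ᵥ f + w)
    (hgrasp : J *ᵥ a + c = Gᵀ *ᵥ b + d) :
    f = (J * M_h⁻¹ * Jᵀ + Gᵀ * M_o⁻¹ * G)⁻¹ *ᵥ
      (J *ᵥ (M_h⁻¹ *ᵥ τ) + c - d - Gᵀ *ᵥ (M_o⁻¹ *ᵥ w)) :=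
  contact_force_formula_general m k M_h hMh M_o hMo J hJ G a b f τ w c d hhand hobj hgrasp
end
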